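/- arXiv:0709.4467 — 2 statements merged into one kernel-verified Lean document; each statement's English description precedes it below -/
import Mathlib

section
/- If f(λ₀)<+∞ for some λ₀>0, then f is continuous on (λ₀,+∞), right continuous at λ₀, and lim_{λ→+∞} f(λ)=0. -/
/-!
Since `u'` is antitone, so is its inverse `I`, and `I` maps `(0, ∞)` onto itself; a monotone map
onto an interval has no jumps, so `I` is continuous, and `I(y) → 0` as `y → ∞`. For `λ ≥ λ₀` the
integrand `I(λξ)ξ` is dominated by the integrable `I(λ₀ξ)ξ`, so continuity and the limit at infinity
pass under the integral by dominated convergence.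
-/

open MeasureTheory Filter Set
open scoped ENNReal

noncomputable def Vval {Ω : Type*} [MeasurableSpace Ω] (P : Measure Ω)
    (ξ : Ω → ℝ) (u : ℝ → ℝ) (a : ℝ) : ℝ≥0∞ :=
  ⨆ (X : Ω → ℝ) (_ : Measurable X) (_ : ∀ᵐ ω ∂P, 0 ≤ X ω)
    (_ : ∫⁻ ω, ENNReal.ofReal (X ω * ξ ω) ∂P = ENNReal.ofReal a),
    ∫⁻ ω, ENNReal.ofReal (u (X ω)) ∂P

/-- `X` is an optimal solution of Problem (P_a): it is feasible (measurable,
nonnegative a.s., satisfying the budget constraint `E[Xξ] = a`) and its expected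
utility dominates that of every feasible solution. -/
def IsOptimal {Ω : Type*} [MeasurableSpace Ω] (P : Measure Ω)
    (ξ : Ω → ℝ) (u : ℝ → ℝ) (a : ℝ) (X : Ω → ℝ) : Prop :=
  Measurable X ∧ (∀ᵐ ω ∂P, 0 ≤ X ω) ∧
    (∫⁻ ω, ENNReal.ofReal (X ω * ξ ω) ∂P = ENNReal.ofReal a) ∧
    ∀ Y : Ω → ℝ, Measurable Y → (∀ᵐ ω ∂P, 0 ≤ Y ω) →
      (∫⁻ ω, ENNReal.ofReal (Y ω * ξ ω) ∂P = ENNReal.ofReal a) →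
      ∫⁻ ω, ENNReal.ofReal (u (Y ω)) ∂P ≤ ∫⁻ ω, ENNReal.ofReal (u (X ω)) ∂P

/-- `fLag P ξ I lam = E[I(λξ)ξ]`, the function whose equation `f(λ) = a`
determines the Lagrange multiplier. -/
noncomputable def fLag {Ω : Type*} [MeasurableSpace Ω] (P : Measure Ω)
    (ξ : Ω → ℝ) (I : ℝ → ℝ) (lam : ℝ) : ℝ≥0∞ :=
  ∫⁻ ω, ENNReal.ofReal (I (lam * ξ ω) * ξ ω) ∂P

open Topology

theorem ConcaveOn.antitoneOn_of_hasDerivAt {S : Set ℝ} {f f' : ℝ → ℝ} (hfc : ConcaveOn ℝ S f)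
    (hf : ∀ x ∈ S, HasDerivAt f (f' x) x) : AntitoneOn f' S := by
  intro x hx y hy hxy
  rcases hxy.eq_or_lt with rfl | hxy
  · rfl
  exact (hfc.le_slope_of_hasDerivAt hx hy hxy (hf y hy)).trans
    (hfc.slope_le_of_hasDerivAt hx hy hxy (hf x hx))

theorem AntitoneOn.strictAntiOn_of_leftInvOn {α β : Type*} [LinearOrder α] [LinearOrder β]
    {g : α → β} {f : β → α} {s : Set α} {t : Set β} (hg : AntitoneOn g s) (hf : MapsTo f t s)
    (hgf : LeftInvOn g f t) : StrictAntiOn f t := by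
  intro y₁ hy₁ y₂ hy₂ hy
  by_contra! hle
  have := hg (hf hy₁) (hf hy₂) hle
  rw [hgf hy₁, hgf hy₂] at this
  exact hy.not_ge this

theorem AntitoneOn.continuousAt_of_image_mem_nhds {α β : Type*} [LinearOrder α]
    [TopologicalSpace α] [OrderTopology α] [LinearOrder β] [TopologicalSpace β] [OrderTopology β]
    [DenselyOrdered β] {f : α → β} {s : Set α} {a : α} (h_anti : AntitoneOn f s) (hs : s ∈ 𝓝 a)
    (hfs : f '' s ∈ 𝓝 (f a)) : ContinuousAt f a :=
  continuousAt_of_monotoneOn_of_image_mem_nhds (β := βᵒᵈ) h_anti hs hfs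

section SelfMapOfIoi

variable {f : ℝ → ℝ} (hanti : AntitoneOn f (Ioi 0)) (hsurj : SurjOn f (Ioi 0) (Ioi 0))
include hanti hsurj

theorem AntitoneOn.continuousOn_Ioi_of_surjOn (hpos : MapsTo f (Ioi 0) (Ioi 0)) :
    ContinuousOn f (Ioi 0) := fun _ hy =>
  (hanti.continuousAt_of_image_mem_nhds (Ioi_mem_nhds hy)
    (mem_of_superset (Ioi_mem_nhds (hpos hy)) hsurj)).continuousWithinAt

theorem AntitoneOn.tendsto_atTop_zero_of_surjOn (hpos : MapsTo f (Ioi 0) (Ioi 0)) :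
    Tendsto f atTop (𝓝 0) := by
  refine tendsto_order.2 ⟨fun a ha => ?_, fun ε hε => ?_⟩
  · filter_upwards [eventually_gt_atTop 0] with y hy using ha.trans (hpos hy)
  · obtain ⟨x, hx, hfx⟩ := hsurj (half_pos hε)
    filter_upwards [eventually_ge_atTop x] with y hy
    calc f y ≤ f x := hanti hx (lt_of_lt_of_le hx hy) hy
      _ = ε / 2 := hfx
      _ < ε := half_lt_self hε

end SelfMapOfIoi

section fLag

variable {Ω : Type*} [MeasurableSpace Ω] {P : Measure Ω} {ξ : Ω → ℝ} {I : ℝ → ℝ} {lam₀ : ℝ}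

theorem ae_fLag_integrand_le_of_le (hI : AntitoneOn I (Ioi 0)) (hξ : ∀ᵐ ω ∂P, 0 < ξ ω)
    (h₀ : 0 < lam₀) {lam : ℝ} (hlam : lam₀ ≤ lam) :
    ∀ᵐ ω ∂P, ENNReal.ofReal (I (lam * ξ ω) * ξ ω) ≤ ENNReal.ofReal (I (lam₀ * ξ ω) * ξ ω) := by
  filter_upwards [hξ] with ω hω
  have h₀ω : 0 < lam₀ * ξ ω := mul_pos h₀ hω
  gcongr
  exact hI h₀ω (h₀ω.trans_le (by gcongr)) (by gcongr)

variable (hI_meas : Measurable I) (hξ_meas : Measurable ξ) (hI : AntitoneOn I (Ioi 0))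
  (hξ : ∀ᵐ ω ∂P, 0 < ξ ω) (h₀ : 0 < lam₀) (hfin : fLag P ξ I lam₀ ≠ ⊤)
include hI_meas hξ_meas hI hξ h₀ hfin

theorem tendsto_fLag_of_ae_tendsto {l : Filter ℝ} [l.IsCountablyGenerated] {g : Ω → ℝ}
    (hl : ∀ᶠ lam in l, lam₀ ≤ lam)
    (hlim : ∀ᵐ ω ∂P, Tendsto (fun lam => I (lam * ξ ω) * ξ ω) l (𝓝 (g ω))) :
    Tendsto (fLag P ξ I) l (𝓝 (∫⁻ ω, ENNReal.ofReal (g ω) ∂P)) := by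
  refine tendsto_lintegral_filter_of_dominated_convergence _
    (.of_forall fun lam => by fun_prop) ?_ hfin ?_
  · filter_upwards [hl] with lam hlam using ae_fLag_integrand_le_of_le hI hξ h₀ hlam
  · filter_upwards [hlim] with ω hω using ENNReal.continuous_ofReal.continuousAt.tendsto.comp hω

theorem continuousWithinAt_fLag (hI_cont : ContinuousOn I (Ioi 0)) {lam : ℝ} (hlam : lam₀ ≤ lam) :
    ContinuousWithinAt (fLag P ξ I) (Ici lam₀) lam := by
  refine tendsto_fLag_of_ae_tendsto hI_meas hξ_meas hI hξ h₀ hfin self_mem_nhdsWithin ?_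
  filter_upwards [hξ] with ω hω
  have hI_at : ContinuousAt I (lam * ξ ω) :=
    hI_cont.continuousAt (Ioi_mem_nhds (mul_pos (h₀.trans_le hlam) hω))
  have h : ContinuousAt (fun t => I (t * ξ ω) * ξ ω) lam :=
    (hI_at.comp (f := (· * ξ ω)) (continuous_mul_const (ξ ω)).continuousAt).mul continuousAt_const
  exact h.continuousWithinAt

theorem tendsto_fLag_atTop (hI_lim : Tendsto I atTop (𝓝 0)) :
    Tendsto (fLag P ξ I) atTop (𝓝 0) := by
  have h := tendsto_fLag_of_ae_tendsto (g := 0) hI_meas hξ_meas hI hξ h₀ hfin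
    (eventually_ge_atTop lam₀) ?_
  · simpa using h
  filter_upwards [hξ] with ω hω
  simpa using (hI_lim.comp (tendsto_id.atTop_mul_const hω)).mul_const (ξ ω)

end fLag

theorem f_continuity_general
    {Ω : Type*} [MeasurableSpace Ω] (P : Measure Ω)
    (ξ : Ω → ℝ) (hξmeas : Measurable ξ) (hξpos : ∀ᵐ ω ∂P, 0 < ξ ω)
    (u u' : ℝ → ℝ)
    (hu_conc : StrictConcaveOn ℝ (Set.Ici (0:ℝ)) u)
    (hu_deriv : ∀ x : ℝ, 0 < x → HasDerivAt u (u' x) x)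
    (hu'_pos : ∀ x : ℝ, 0 < x → 0 < u' x)
    (I : ℝ → ℝ) (hI_meas : Measurable I) (hI_pos : ∀ y : ℝ, 0 < y → 0 < I y)
    (hI_left : ∀ x : ℝ, 0 < x → I (u' x) = x)
    (hI_right : ∀ y : ℝ, 0 < y → u' (I y) = y)
    (lam0 : ℝ) (hlam0 : 0 < lam0) (hfin : fLag P ξ I lam0 < ⊤)
    :
    ContinuousOn (fLag P ξ I) (Set.Ioi lam0) ∧
      ContinuousWithinAt (fLag P ξ I) (Set.Ici lam0) lam0 ∧
      Tendsto (fLag P ξ I) atTop (nhds 0) := by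
  have hI_maps : MapsTo I (Ioi 0) (Ioi 0) := hI_pos
  have hI_surj : SurjOn I (Ioi 0) (Ioi 0) := fun x hx => ⟨u' x, hu'_pos x hx, hI_left x hx⟩
  have hu'_anti : AntitoneOn u' (Ioi 0) :=
    (hu_conc.concaveOn.subset Ioi_subset_Ici_self (convex_Ioi 0)).antitoneOn_of_hasDerivAt hu_deriv
  have hI_anti : AntitoneOn I (Ioi 0) :=
    (hu'_anti.strictAntiOn_of_leftInvOn hI_maps hI_right).antitoneOn
  have hcont : ∀ lam, lam0 ≤ lam → ContinuousWithinAt (fLag P ξ I) (Ici lam0) lam :=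
    fun lam => continuousWithinAt_fLag hI_meas hξmeas hI_anti hξpos hlam0 hfin.ne
      (hI_anti.continuousOn_Ioi_of_surjOn hI_surj hI_maps)
  exact ⟨fun lam hlam => (hcont lam hlam.le).mono Ioi_subset_Ici_self, hcont lam0 le_rfl,
    tendsto_fLag_atTop hI_meas hξmeas hI_anti hξpos hlam0 hfin.ne
      (hI_anti.tendsto_atTop_zero_of_surjOn hI_surj hI_maps)⟩

theorem f_continuity
    {Ω : Type*} [MeasurableSpace Ω] (P : Measure Ω) [IsProbabilityMeasure P]
    (ξ : Ω → ℝ) (hξmeas : Measurable ξ) (hξpos : ∀ᵐ ω ∂P, 0 < ξ ω)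
    (u u' u'' : ℝ → ℝ) (hu_meas : Measurable u)
    (hu0 : u 0 = 0) (hu_nonneg : ∀ x : ℝ, 0 ≤ x → 0 ≤ u x)
    (hu_mono : StrictMonoOn u (Set.Ici (0:ℝ)))
    (hu_conc : StrictConcaveOn ℝ (Set.Ici (0:ℝ)) u)
    (hu_deriv : ∀ x : ℝ, 0 < x → HasDerivAt u (u' x) x)
    (hu_deriv2 : ∀ x : ℝ, 0 < x → HasDerivAt u' (u'' x) x)
    (hu'_pos : ∀ x : ℝ, 0 < x → 0 < u' x)
    (hu'_zero : Tendsto u' (nhdsWithin 0 (Set.Ioi 0)) atTop)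
    (hu'_top : Tendsto u' atTop (nhds 0))
    (I : ℝ → ℝ) (hI_meas : Measurable I) (hI_pos : ∀ y : ℝ, 0 < y → 0 < I y)
    (hI_left : ∀ x : ℝ, 0 < x → I (u' x) = x)
    (hI_right : ∀ y : ℝ, 0 < y → u' (I y) = y)
    (lam0 : ℝ) (hlam0 : 0 < lam0) (hfin : fLag P ξ I lam0 < ⊤)
    :
    ContinuousOn (fLag P ξ I) (Set.Ioi lam0) ∧
      ContinuousWithinAt (fLag P ξ I) (Set.Ici lam0) lam0 ∧
      Tendsto (fLag P ξ I) atTop (nhds 0) :=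
  f_continuity_general P ξ hξmeas hξpos u u' hu_conc hu_deriv hu'_pos I hI_meas hI_pos hI_left
    hI_right lam0 hlam0 hfin
end

section
/- If V(a)<+∞ for some a>0, then there exists a₀>0 such that for every a with 0<a≤a₀, Problem (P_a) admits an optimal solution, unique up to almost sure equality. -/
open MeasureTheory Filter Set
open scoped ENNReal

/-!
Let `I` be the inverse of `u'` on `(0, ∞)`. For a multiplier `λ > 0` the claim `X = I(λξ)`
satisfies the first-order condition `u'(X) = λξ`, so the tangent-line inequality
`u(Y) ≤ u(X) + λξ(Y - X)` integrates, for every `Y` of the same cost, to `E[u(Y)] ≤ E[u(X)]`;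
when `E[u(X)] < ∞` equality forces `Y = X` a.s. by strict concavity. It remains to solve
`f(λ) = E[I(λξ)ξ] = a`. If `V(â) < ∞`, monotonicity and concavity give
`V(b) ≤ V(â)(1 + b/â)`, so a claim whose utility dominates `λ` times its cost costs at most
`V(â) / (λ - V(â)/â)`. Hence `f` is finite and tends to `0` as `λ → ∞`, dominated convergence
makes it continuous, and the intermediate value theorem solves `f(λ) = a` for every
`a ≤ min (f(V(â)/â + 1)) â`.
-/

open Function
open scoped Topology

namespace StrictConcaveOn

variable {S : Set ℝ} {f : ℝ → ℝ} {x y d : ℝ}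

theorem lt_tangent (hf : StrictConcaveOn ℝ S f) (hx : x ∈ S) (hy : y ∈ S) (hyx : y ≠ x)
    (hd : HasDerivAt f d x) : f y < f x + d * (y - x) := by
  rcases hyx.lt_or_gt with hlt | hlt
  · have := hf.lt_slope_of_hasDerivAt hy hx hlt hd
    rw [slope_def_field, lt_div_iff₀ (sub_pos.2 hlt)] at this
    linarith
  · have := hf.slope_lt_of_hasDerivAt hx hy hlt hd
    rw [slope_def_field, div_lt_iff₀ (sub_pos.2 hlt)] at this
    linarith

theorem le_tangent (hf : StrictConcaveOn ℝ S f) (hx : x ∈ S) (hy : y ∈ S)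
    (hd : HasDerivAt f d x) : f y ≤ f x + d * (y - x) := by
  rcases eq_or_ne y x with rfl | hyx
  · simp
  · exact (hf.lt_tangent hx hy hyx hd).le

theorem strictAntiOn_of_hasDerivAt {f' : ℝ → ℝ} (hf : StrictConcaveOn ℝ S f)
    (hf' : ∀ x ∈ S, HasDerivAt f (f' x) x) : StrictAntiOn f' S := fun x hx y hy hxy =>
  (hf.lt_slope_of_hasDerivAt hx hy hxy (hf' y hy)).trans
    (hf.slope_lt_of_hasDerivAt hx hy hxy (hf' x hx))

end StrictConcaveOn

section Utility

variable {u u' : ℝ → ℝ}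

theorem mul_deriv_lt_of_strictConcaveOn (hu_conc : StrictConcaveOn ℝ (Ici 0) u) (hu0 : u 0 = 0)
    {x d : ℝ} (hx : 0 < x) (hd : HasDerivAt u d x) : x * d < u x := by
  have := hu_conc.lt_tangent hx.le self_mem_Ici hx.ne hd
  rw [hu0] at this
  linarith

theorem mul_map_le_map_mul (hu_conc : ConcaveOn ℝ (Ici 0) u) (hu0 : u 0 = 0) {t x : ℝ}
    (ht₀ : 0 ≤ t) (ht₁ : t ≤ 1) (hx : 0 ≤ x) : t * u x ≤ u (t * x) := by
  simpa [hu0] using hu_conc.2 (mem_Ici.2 hx) self_mem_Ici ht₀ (sub_nonneg.2 ht₁) (by ring)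

theorem strictAntiOn_deriv_Ioi (hu_conc : StrictConcaveOn ℝ (Ici 0) u)
    (hu_deriv : ∀ x : ℝ, 0 < x → HasDerivAt u (u' x) x) : StrictAntiOn u' (Ioi 0) :=
  (hu_conc.subset Ioi_subset_Ici_self (convex_Ioi 0)).strictAntiOn_of_hasDerivAt hu_deriv

theorem surjOn_deriv_Ioi (hu_deriv : ∀ x : ℝ, 0 < x → HasDerivAt u (u' x) x)
    (hu'_zero : Tendsto u' (𝓝[>] 0) atTop) (hu'_top : Tendsto u' atTop (𝓝 0)) :
    SurjOn u' (Ioi 0) (Ioi 0) := by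
  intro y (hy : 0 < y)
  obtain ⟨x₁, hx₁, hyx₁⟩ : ∃ x ∈ Ioi (0 : ℝ), y < u' x :=
    ((eventually_mem_nhdsWithin).and (hu'_zero.eventually_gt_atTop y)).exists
  obtain ⟨x₂, hx₂, hx₂y⟩ :=
    ((eventually_gt_atTop 0).and (hu'_top.eventually_lt_const hy)).exists
  have hconn : OrdConnected (u' '' Ioi 0) :=
    ordConnected_Ioi.image_hasDerivWithinAt fun x hx => (hu_deriv x hx).hasDerivWithinAt
  exact hconn.out (mem_image_of_mem _ hx₂) (mem_image_of_mem _ hx₁) ⟨hx₂y.le, hyx₁.le⟩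

end Utility

/-- The inverse of `u'` on `(0, ∞)`, extended by `0` to `(-∞, 0]`. -/
noncomputable def marginalInv (u' : ℝ → ℝ) : ℝ → ℝ :=
  (Ioi 0).piecewise (invFunOn u' (Ioi 0)) 0

section MarginalInv

variable {u u' : ℝ → ℝ}

theorem marginalInv_spec (hu_deriv : ∀ x : ℝ, 0 < x → HasDerivAt u (u' x) x)
    (hu'_zero : Tendsto u' (𝓝[>] 0) atTop) (hu'_top : Tendsto u' atTop (𝓝 0))
    {y : ℝ} (hy : 0 < y) : 0 < marginalInv u' y ∧ u' (marginalInv u' y) = y := by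
  have hsurj := surjOn_deriv_Ioi hu_deriv hu'_zero hu'_top hy
  rw [marginalInv, piecewise_eq_of_mem _ _ _ (show y ∈ Ioi 0 from hy)]
  exact ⟨invFunOn_mem hsurj, invFunOn_eq hsurj⟩

theorem marginalInv_deriv (hu_conc : StrictConcaveOn ℝ (Ici 0) u)
    (hu_deriv : ∀ x : ℝ, 0 < x → HasDerivAt u (u' x) x) (hu'_pos : ∀ x : ℝ, 0 < x → 0 < u' x)
    {x : ℝ} (hx : 0 < x) : marginalInv u' (u' x) = x := by
  rw [marginalInv, piecewise_eq_of_mem _ _ _ (show u' x ∈ Ioi 0 from hu'_pos x hx)]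
  exact (strictAntiOn_deriv_Ioi hu_conc hu_deriv).injOn.leftInvOn_invFunOn hx

theorem strictAntiOn_marginalInv (hu_conc : StrictConcaveOn ℝ (Ici 0) u)
    (hu_deriv : ∀ x : ℝ, 0 < x → HasDerivAt u (u' x) x)
    (hu'_zero : Tendsto u' (𝓝[>] 0) atTop) (hu'_top : Tendsto u' atTop (𝓝 0)) :
    StrictAntiOn (marginalInv u') (Ioi 0) := by
  intro y₁ hy₁ y₂ hy₂ hlt
  obtain ⟨hx₁, hux₁⟩ := marginalInv_spec hu_deriv hu'_zero hu'_top hy₁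
  obtain ⟨hx₂, hux₂⟩ := marginalInv_spec hu_deriv hu'_zero hu'_top hy₂
  exact ((strictAntiOn_deriv_Ioi hu_conc hu_deriv).lt_iff_gt hx₁ hx₂).1 (by rwa [hux₁, hux₂])

theorem continuousOn_marginalInv (hu_conc : StrictConcaveOn ℝ (Ici 0) u)
    (hu_deriv : ∀ x : ℝ, 0 < x → HasDerivAt u (u' x) x) (hu'_pos : ∀ x : ℝ, 0 < x → 0 < u' x)
    (hu'_zero : Tendsto u' (𝓝[>] 0) atTop) (hu'_top : Tendsto u' atTop (𝓝 0)) :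
    ContinuousOn (marginalInv u') (Ioi 0) := by
  intro y (hy : 0 < y)
  -- `-marginalInv u'` is strictly monotone and its image contains the open set `(-∞, 0)`
  have hmono : StrictMonoOn (fun y => -marginalInv u' y) (Ioi 0) := fun y₁ hy₁ y₂ hy₂ hlt =>
    neg_lt_neg (strictAntiOn_marginalInv hu_conc hu_deriv hu'_zero hu'_top hy₁ hy₂ hlt)
  have himage : Iio 0 ⊆ (fun y => -marginalInv u' y) '' Ioi 0 := fun z (hz : z < 0) =>
    ⟨u' (-z), hu'_pos _ (neg_pos.2 hz), by
      simp only [marginalInv_deriv hu_conc hu_deriv hu'_pos (neg_pos.2 hz), neg_neg]⟩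
  have hneg := hmono.continuousAt_of_image_mem_nhds (Ioi_mem_nhds hy) <| mem_of_superset
    (Iio_mem_nhds (neg_lt_zero.2 (marginalInv_spec hu_deriv hu'_zero hu'_top hy).1)) himage
  simpa only [neg_neg] using hneg.fun_neg.continuousWithinAt

theorem measurable_marginalInv (hu_conc : StrictConcaveOn ℝ (Ici 0) u)
    (hu_deriv : ∀ x : ℝ, 0 < x → HasDerivAt u (u' x) x) (hu'_pos : ∀ x : ℝ, 0 < x → 0 < u' x)
    (hu'_zero : Tendsto u' (𝓝[>] 0) atTop) (hu'_top : Tendsto u' atTop (𝓝 0)) :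
    Measurable (marginalInv u') := by
  have hcont := continuousOn_marginalInv hu_conc hu_deriv hu'_pos hu'_zero hu'_top
  refine ContinuousOn.measurable_piecewise ?_ continuousOn_const measurableSet_Ioi
  exact hcont.congr fun y hy => (piecewise_eq_of_mem _ _ _ hy).symm

end MarginalInv

section ValueFunction

variable {Ω : Type*} [MeasurableSpace Ω] {P : Measure Ω} {ξ : Ω → ℝ} {u : ℝ → ℝ}

theorem lintegral_le_Vval {a : ℝ} {X : Ω → ℝ} (hX : Measurable X) (hX₀ : ∀ᵐ ω ∂P, 0 ≤ X ω)
    (hXa : ∫⁻ ω, ENNReal.ofReal (X ω * ξ ω) ∂P = ENNReal.ofReal a) :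
    ∫⁻ ω, ENNReal.ofReal (u (X ω)) ∂P ≤ Vval P ξ u a :=
  le_iSup₂_of_le X hX <| le_iSup₂_of_le hX₀ hXa le_rfl

theorem Vval_le {a : ℝ} {c : ℝ≥0∞}
    (h : ∀ X : Ω → ℝ, Measurable X → (∀ᵐ ω ∂P, 0 ≤ X ω) →
      ∫⁻ ω, ENNReal.ofReal (X ω * ξ ω) ∂P = ENNReal.ofReal a →
      ∫⁻ ω, ENNReal.ofReal (u (X ω)) ∂P ≤ c) :
    Vval P ξ u a ≤ c :=
  iSup₂_le fun X hX => iSup₂_le fun hX₀ hXa => h X hX hX₀ hXa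

theorem Vval_mono [IsProbabilityMeasure P] (hξ : Measurable ξ) (hξ₀ : ∀ᵐ ω ∂P, 0 < ξ ω)
    (hu_mono : MonotoneOn u (Ici 0)) {a b : ℝ} (ha : 0 ≤ a) (hab : a ≤ b) :
    Vval P ξ u a ≤ Vval P ξ u b := by
  refine Vval_le fun X hX hX₀ hXa => ?_
  set Y : Ω → ℝ := fun ω => X ω + (b - a) / ξ ω
  have hXY : ∀ᵐ ω ∂P, 0 ≤ X ω ∧ X ω ≤ Y ω := by
    filter_upwards [hX₀, hξ₀] with ω hXω hξω
    exact ⟨hXω, le_add_of_nonneg_right (div_nonneg (sub_nonneg.2 hab) hξω.le)⟩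
  have hYb : ∫⁻ ω, ENNReal.ofReal (Y ω * ξ ω) ∂P = ENNReal.ofReal b := by
    have hsplit : ∀ᵐ ω ∂P, ENNReal.ofReal (Y ω * ξ ω)
        = ENNReal.ofReal (X ω * ξ ω) + ENNReal.ofReal (b - a) := by
      filter_upwards [hX₀, hξ₀] with ω hXω hξω
      rw [← ENNReal.ofReal_add (mul_nonneg hXω hξω.le) (sub_nonneg.2 hab)]
      congr 1
      simp only [Y]
      field_simp
    rw [lintegral_congr_ae hsplit, lintegral_add_right _ measurable_const, hXa, lintegral_const,
      measure_univ, mul_one, ← ENNReal.ofReal_add ha (sub_nonneg.2 hab), add_sub_cancel]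
  calc ∫⁻ ω, ENNReal.ofReal (u (X ω)) ∂P ≤ ∫⁻ ω, ENNReal.ofReal (u (Y ω)) ∂P :=
        lintegral_mono_ae <| hXY.mono fun ω h =>
          ENNReal.ofReal_le_ofReal (hu_mono h.1 (h.1.trans h.2) h.2)
    _ ≤ Vval P ξ u b :=
        lintegral_le_Vval (hX.add (measurable_const.div hξ))
          (hXY.mono fun ω h => h.1.trans h.2) hYb

theorem Vval_le_div_mul (hu_conc : ConcaveOn ℝ (Ici 0) u) (hu0 : u 0 = 0) {a b : ℝ} (ha : 0 < a)
    (hab : a ≤ b) : Vval P ξ u b ≤ ENNReal.ofReal (b / a) * Vval P ξ u a := by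
  refine Vval_le fun X hX hX₀ hXb => ?_
  have hb : 0 < b := ha.trans_le hab
  set t := a / b
  have ht₀ : 0 ≤ t := by positivity
  have hYa : ∫⁻ ω, ENNReal.ofReal (t * X ω * ξ ω) ∂P = ENNReal.ofReal a := by
    simp_rw [mul_assoc, ENNReal.ofReal_mul ht₀]
    rw [lintegral_const_mul' _ _ ENNReal.ofReal_ne_top, hXb, ← ENNReal.ofReal_mul ht₀,
      div_mul_cancel₀ _ hb.ne']
  have hscale : ENNReal.ofReal t * ∫⁻ ω, ENNReal.ofReal (u (X ω)) ∂P ≤ Vval P ξ u a := by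
    rw [← lintegral_const_mul' _ _ ENNReal.ofReal_ne_top]
    refine le_trans (lintegral_mono_ae ?_)
      (lintegral_le_Vval (measurable_const.mul hX) (hX₀.mono fun ω h => mul_nonneg ht₀ h) hYa)
    filter_upwards [hX₀] with ω hXω
    rw [← ENNReal.ofReal_mul ht₀]
    exact ENNReal.ofReal_le_ofReal
      (mul_map_le_map_mul hu_conc hu0 ht₀ (div_le_one_of_le₀ hab hb.le) hXω)
  calc ∫⁻ ω, ENNReal.ofReal (u (X ω)) ∂P
      = ENNReal.ofReal (b / a) * (ENNReal.ofReal t * ∫⁻ ω, ENNReal.ofReal (u (X ω)) ∂P) := by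
        have hbt : b / a * t = 1 := by simp only [t]; field_simp
        rw [← mul_assoc, ← ENNReal.ofReal_mul (by positivity), hbt, ENNReal.ofReal_one, one_mul]
    _ ≤ ENNReal.ofReal (b / a) * Vval P ξ u a := by gcongr

theorem Vval_le_affine [IsProbabilityMeasure P] (hξ : Measurable ξ) (hξ₀ : ∀ᵐ ω ∂P, 0 < ξ ω)
    (hu_mono : MonotoneOn u (Ici 0)) (hu_conc : ConcaveOn ℝ (Ici 0) u) (hu0 : u 0 = 0)
    {a b : ℝ} (ha : 0 < a) (hV : Vval P ξ u a ≠ ⊤) (hb : 0 ≤ b) :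
    Vval P ξ u b ≤ ENNReal.ofReal ((Vval P ξ u a).toReal * (1 + b / a)) := by
  set V := (Vval P ξ u a).toReal
  have hVa : Vval P ξ u a = ENNReal.ofReal V := (ENNReal.ofReal_toReal hV).symm
  have hV₀ : 0 ≤ V := ENNReal.toReal_nonneg
  rcases le_total b a with hba | hab
  · calc Vval P ξ u b ≤ Vval P ξ u a := Vval_mono hξ hξ₀ hu_mono hb hba
      _ ≤ _ := by
        rw [hVa]
        exact ENNReal.ofReal_le_ofReal
          (le_mul_of_one_le_right hV₀ (le_add_of_nonneg_right (by positivity)))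
  · calc Vval P ξ u b ≤ ENNReal.ofReal (b / a) * Vval P ξ u a :=
          Vval_le_div_mul hu_conc hu0 ha hab
      _ ≤ _ := by
        rw [hVa, ← ENNReal.ofReal_mul (by positivity)]
        exact ENNReal.ofReal_le_ofReal (by nlinarith [div_nonneg hb ha.le])

end ValueFunction

theorem lintegral_ofReal_eq_iSup_setLIntegral {Ω : Type*} [MeasurableSpace Ω] {P : Measure Ω}
    (f : Ω → ℝ) :
    ∫⁻ ω, ENNReal.ofReal (f ω) ∂P = ⨆ n : ℕ, ∫⁻ ω in {ω | f ω ≤ n}, ENNReal.ofReal (f ω) ∂P := by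
  have hunion : (⋃ n : ℕ, {ω | f ω ≤ n}) = univ :=
    eq_univ_of_forall fun ω => mem_iUnion.2 (exists_nat_ge (f ω))
  have hmono : Monotone fun n : ℕ => {ω | f ω ≤ n} := fun m n hmn ω (hω : f ω ≤ m) =>
    hω.trans (Nat.cast_le.2 hmn)
  rw [← setLIntegral_iUnion_of_directed _ hmono.directed_le, hunion, Measure.restrict_univ]

section BudgetBound

variable {Ω : Type*} [MeasurableSpace Ω] {P : Measure Ω} [IsProbabilityMeasure P]
  {ξ : Ω → ℝ} {u : ℝ → ℝ}

theorem le_div_of_mul_le_utility (hξ : Measurable ξ) (hξ₀ : ∀ᵐ ω ∂P, 0 < ξ ω)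
    (hu_mono : MonotoneOn u (Ici 0)) (hu_conc : ConcaveOn ℝ (Ici 0) u) (hu0 : u 0 = 0)
    {a lam b : ℝ} (ha : 0 < a) (hV : Vval P ξ u a ≠ ⊤) (hlam : (Vval P ξ u a).toReal / a < lam)
    {X : Ω → ℝ} (hX : Measurable X) (hX₀ : ∀ᵐ ω ∂P, 0 ≤ X ω)
    (hXu : ∀ᵐ ω ∂P, lam * (X ω * ξ ω) ≤ u (X ω)) (hb : 0 ≤ b)
    (hXb : ∫⁻ ω, ENNReal.ofReal (X ω * ξ ω) ∂P = ENNReal.ofReal b) :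
    b ≤ (Vval P ξ u a).toReal / (lam - (Vval P ξ u a).toReal / a) := by
  set V := (Vval P ξ u a).toReal
  have hV₀ : 0 ≤ V := ENNReal.toReal_nonneg
  have hlam₀ : 0 ≤ lam := (div_nonneg hV₀ ha.le).trans hlam.le
  have hcost : ENNReal.ofReal (lam * b) ≤ ENNReal.ofReal (V * (1 + b / a)) :=
    calc ENNReal.ofReal (lam * b) = ∫⁻ ω, ENNReal.ofReal (lam * (X ω * ξ ω)) ∂P := by
          simp_rw [ENNReal.ofReal_mul hlam₀]
          rw [lintegral_const_mul' _ _ ENNReal.ofReal_ne_top, hXb]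
      _ ≤ ∫⁻ ω, ENNReal.ofReal (u (X ω)) ∂P :=
          lintegral_mono_ae (hXu.mono fun ω h => ENNReal.ofReal_le_ofReal h)
      _ ≤ Vval P ξ u b := lintegral_le_Vval hX hX₀ hXb
      _ ≤ ENNReal.ofReal (V * (1 + b / a)) :=
          Vval_le_affine hξ hξ₀ hu_mono hu_conc hu0 ha hV hb
  have hreal : lam * b ≤ V + V / a * b := by
    have := (ENNReal.ofReal_le_ofReal_iff (by positivity)).1 hcost
    linarith [show V * (1 + b / a) = V + V / a * b by ring]
  rw [le_div_iff₀ (sub_pos.2 hlam)]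
  linarith

theorem lintegral_le_div_of_mul_le_utility (hξ : Measurable ξ) (hξ₀ : ∀ᵐ ω ∂P, 0 < ξ ω)
    (hu_mono : MonotoneOn u (Ici 0)) (hu_conc : ConcaveOn ℝ (Ici 0) u) (hu0 : u 0 = 0)
    {a lam : ℝ} (ha : 0 < a) (hV : Vval P ξ u a ≠ ⊤) (hlam : (Vval P ξ u a).toReal / a < lam)
    {X : Ω → ℝ} (hX : Measurable X) (hX₀ : ∀ᵐ ω ∂P, 0 ≤ X ω)
    (hXu : ∀ᵐ ω ∂P, lam * (X ω * ξ ω) ≤ u (X ω)) :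
    ∫⁻ ω, ENNReal.ofReal (X ω * ξ ω) ∂P ≤
      ENNReal.ofReal ((Vval P ξ u a).toReal / (lam - (Vval P ξ u a).toReal / a)) := by
  -- the cost of `X` may be infinite: apply the finite-cost case to the truncations of `X`
  rw [lintegral_ofReal_eq_iSup_setLIntegral]
  refine iSup_le fun n => ?_
  set S := {ω | X ω * ξ ω ≤ n}
  have hS : MeasurableSet S := measurableSet_le (hX.mul hξ) measurable_const
  have hcost : ∫⁻ ω, ENNReal.ofReal (S.indicator X ω * ξ ω) ∂P =
      ∫⁻ ω in S, ENNReal.ofReal (X ω * ξ ω) ∂P := by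
    rw [← lintegral_indicator hS]
    congr 1 with ω
    by_cases hω : ω ∈ S <;> simp [hω]
  have hfin : ∫⁻ ω in S, ENNReal.ofReal (X ω * ξ ω) ∂P ≠ ⊤ := by
    refine ne_top_of_le_ne_top (b := ∫⁻ _ in S, (n : ℝ≥0∞) ∂P) ?_ ?_
    · rw [setLIntegral_const]
      exact ENNReal.mul_ne_top (by simp) (measure_ne_top _ _)
    · refine setLIntegral_mono' hS fun ω (hω : X ω * ξ ω ≤ n) => ?_
      simpa using ENNReal.ofReal_le_ofReal hω
  rw [← ENNReal.ofReal_toReal hfin]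
  refine ENNReal.ofReal_le_ofReal
    (le_div_of_mul_le_utility hξ hξ₀ hu_mono hu_conc hu0 ha hV hlam (hX.indicator hS) ?_ ?_
      ENNReal.toReal_nonneg (by rw [hcost, ENNReal.ofReal_toReal hfin]))
  · filter_upwards [hX₀] with ω hω
    exact indicator_nonneg (fun _ _ => hω) ω
  · filter_upwards [hXu] with ω hω
    by_cases hωS : ω ∈ S <;> simp [hωS, hω, hu0]

end BudgetBound

section FirstOrderCondition

variable {Ω : Type*} [MeasurableSpace Ω] {P : Measure Ω} {ξ : Ω → ℝ} {u u' : ℝ → ℝ}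
  {lam a : ℝ} {X : Ω → ℝ}

theorem lintegral_ofReal_add_mul_cost (hξ : Measurable ξ) (hξ₀ : ∀ᵐ ω ∂P, 0 < ξ ω)
    (hlam : 0 ≤ lam) {g : Ω → ℝ} (hg : ∀ᵐ ω ∂P, 0 ≤ g ω) {Z : Ω → ℝ} (hZ : Measurable Z)
    (hZ₀ : ∀ᵐ ω ∂P, 0 ≤ Z ω) (hZa : ∫⁻ ω, ENNReal.ofReal (Z ω * ξ ω) ∂P = ENNReal.ofReal a) :
    ∫⁻ ω, ENNReal.ofReal (g ω + lam * (Z ω * ξ ω)) ∂P =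
      ∫⁻ ω, ENNReal.ofReal (g ω) ∂P + ENNReal.ofReal (lam * a) := by
  have hsplit : ∀ᵐ ω ∂P, ENNReal.ofReal (g ω + lam * (Z ω * ξ ω)) =
      ENNReal.ofReal (g ω) + ENNReal.ofReal lam * ENNReal.ofReal (Z ω * ξ ω) := by
    filter_upwards [hg, hZ₀, hξ₀] with ω hgω hZω hξω
    rw [ENNReal.ofReal_add hgω (by positivity), ENNReal.ofReal_mul hlam]
  rw [lintegral_congr_ae hsplit, lintegral_add_right _ (by fun_prop),
    lintegral_const_mul' _ _ ENNReal.ofReal_ne_top, hZa, ENNReal.ofReal_mul hlam]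

-- Both sides equal `E[u(X) - lam ξ X] + lam a`.
theorem lintegral_tangent_eq (hξ : Measurable ξ) (hξ₀ : ∀ᵐ ω ∂P, 0 < ξ ω) (hlam : 0 ≤ lam)
    (hX : Measurable X) (hX₀ : ∀ᵐ ω ∂P, 0 ≤ X ω) (hXu : ∀ᵐ ω ∂P, lam * (X ω * ξ ω) ≤ u (X ω))
    (hXa : ∫⁻ ω, ENNReal.ofReal (X ω * ξ ω) ∂P = ENNReal.ofReal a) {Z : Ω → ℝ}
    (hZ : Measurable Z) (hZ₀ : ∀ᵐ ω ∂P, 0 ≤ Z ω)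
    (hZa : ∫⁻ ω, ENNReal.ofReal (Z ω * ξ ω) ∂P = ENNReal.ofReal a) :
    ∫⁻ ω, ENNReal.ofReal (u (X ω) + lam * ξ ω * (Z ω - X ω)) ∂P =
      ∫⁻ ω, ENNReal.ofReal (u (X ω)) ∂P := by
  have hg : ∀ᵐ ω ∂P, 0 ≤ u (X ω) - lam * (X ω * ξ ω) := hXu.mono fun ω h => sub_nonneg.2 h
  have hX' := lintegral_ofReal_add_mul_cost hξ hξ₀ hlam hg hX hX₀ hXa
  simp only [sub_add_cancel] at hX'
  rw [hX', ← lintegral_ofReal_add_mul_cost hξ hξ₀ hlam hg hZ hZ₀ hZa]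
  refine lintegral_congr fun ω => ?_
  ring_nf

theorem ae_mul_cost_lt_utility (hu_conc : StrictConcaveOn ℝ (Ici 0) u) (hu0 : u 0 = 0)
    (hu_deriv : ∀ x : ℝ, 0 < x → HasDerivAt u (u' x) x)
    (hFOC : ∀ᵐ ω ∂P, 0 < X ω ∧ u' (X ω) = lam * ξ ω) :
    ∀ᵐ ω ∂P, lam * (X ω * ξ ω) < u (X ω) := by
  filter_upwards [hFOC] with ω ⟨hXω, hω⟩
  have := mul_deriv_lt_of_strictConcaveOn hu_conc hu0 hXω (hu_deriv _ hXω)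
  rw [hω] at this
  linarith

theorem isOptimal_of_deriv_eq (hξ : Measurable ξ) (hξ₀ : ∀ᵐ ω ∂P, 0 < ξ ω)
    (hu_conc : StrictConcaveOn ℝ (Ici 0) u) (hu0 : u 0 = 0)
    (hu_deriv : ∀ x : ℝ, 0 < x → HasDerivAt u (u' x) x) (hlam : 0 ≤ lam)
    (hX : Measurable X) (hFOC : ∀ᵐ ω ∂P, 0 < X ω ∧ u' (X ω) = lam * ξ ω)
    (hXa : ∫⁻ ω, ENNReal.ofReal (X ω * ξ ω) ∂P = ENNReal.ofReal a) :
    IsOptimal P ξ u a X := by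
  have hXu := ae_mul_cost_lt_utility hu_conc hu0 hu_deriv hFOC
  refine ⟨hX, hFOC.mono fun _ h => h.1.le, hXa, fun Y hY hY₀ hYa => ?_⟩
  calc ∫⁻ ω, ENNReal.ofReal (u (Y ω)) ∂P
      ≤ ∫⁻ ω, ENNReal.ofReal (u (X ω) + lam * ξ ω * (Y ω - X ω)) ∂P := by
        refine lintegral_mono_ae ?_
        filter_upwards [hY₀, hFOC] with ω hYω ⟨hXω, hω⟩
        rw [← hω]
        exact ENNReal.ofReal_le_ofReal (hu_conc.le_tangent hXω.le hYω (hu_deriv _ hXω))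
    _ = ∫⁻ ω, ENNReal.ofReal (u (X ω)) ∂P :=
        lintegral_tangent_eq hξ hξ₀ hlam hX (hFOC.mono fun _ h => h.1.le)
          (hXu.mono fun _ h => h.le) hXa hY hY₀ hYa

theorem ae_eq_of_isOptimal_of_deriv_eq (hξ : Measurable ξ) (hξ₀ : ∀ᵐ ω ∂P, 0 < ξ ω)
    (hu_meas : Measurable u) (hu_conc : StrictConcaveOn ℝ (Ici 0) u) (hu0 : u 0 = 0)
    (hu_deriv : ∀ x : ℝ, 0 < x → HasDerivAt u (u' x) x) (hlam : 0 ≤ lam)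
    (hX : Measurable X) (hFOC : ∀ᵐ ω ∂P, 0 < X ω ∧ u' (X ω) = lam * ξ ω)
    (hXa : ∫⁻ ω, ENNReal.ofReal (X ω * ξ ω) ∂P = ENNReal.ofReal a) (hV : Vval P ξ u a ≠ ⊤)
    {Y : Ω → ℝ} (hY : IsOptimal P ξ u a Y) : Y =ᵐ[P] X := by
  obtain ⟨hYm, hY₀, hYa, hYopt⟩ := hY
  have hXu := ae_mul_cost_lt_utility hu_conc hu0 hu_deriv hFOC
  set T : Ω → ℝ := fun ω => u (X ω) + lam * ξ ω * (Y ω - X ω)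
  have hle : ∀ᵐ ω ∂P, ENNReal.ofReal (u (Y ω)) ≤ ENNReal.ofReal (T ω) := by
    filter_upwards [hY₀, hFOC] with ω hYω ⟨hXω, hω⟩
    simp only [T, ← hω]
    exact ENNReal.ofReal_le_ofReal (hu_conc.le_tangent hXω.le hYω (hu_deriv _ hXω))
  -- `E[u(Y)] = E[u(X)] = E[T]` is finite, so the tangent inequality `u(Y) ≤ T` is an a.e. equality
  have hint : ∫⁻ ω, ENNReal.ofReal (T ω) ∂P ≤ ∫⁻ ω, ENNReal.ofReal (u (Y ω)) ∂P :=
    (lintegral_tangent_eq hξ hξ₀ hlam hX (hFOC.mono fun _ h => h.1.le) (hXu.mono fun _ h => h.le)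
      hXa hYm hY₀ hYa).trans_le (hYopt X hX (hFOC.mono fun _ h => h.1.le) hXa)
  have hfin : ∫⁻ ω, ENNReal.ofReal (u (Y ω)) ∂P ≠ ⊤ :=
    ne_top_of_le_ne_top hV (lintegral_le_Vval hYm hY₀ hYa)
  have heq := ae_eq_of_ae_le_of_lintegral_le hle hfin (by fun_prop) hint
  filter_upwards [heq, hY₀, hFOC, hXu, hξ₀] with ω hω hYω ⟨hXω, hu'ω⟩ hXuω hξω
  by_contra hne
  have hlt := hu_conc.lt_tangent hXω.le hYω hne (hu_deriv _ hXω)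
  rw [hu'ω] at hlt
  have hT : 0 < T ω := by
    have : 0 ≤ lam * (Y ω * ξ ω) := by positivity
    simp only [T]
    linarith
  exact ((ENNReal.ofReal_lt_ofReal_iff hT).2 hlt).ne hω

end FirstOrderCondition

section Multiplier

variable {Ω : Type*} [MeasurableSpace Ω] {P : Measure Ω} {ξ : Ω → ℝ}

theorem ae_marginalInv_spec {u u' : ℝ → ℝ} (hu_deriv : ∀ x : ℝ, 0 < x → HasDerivAt u (u' x) x)
    (hu'_zero : Tendsto u' (𝓝[>] 0) atTop) (hu'_top : Tendsto u' atTop (𝓝 0))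
    (hξ₀ : ∀ᵐ ω ∂P, 0 < ξ ω) {lam : ℝ} (hlam : 0 < lam) :
    ∀ᵐ ω ∂P, 0 < marginalInv u' (lam * ξ ω) ∧ u' (marginalInv u' (lam * ξ ω)) = lam * ξ ω :=
  hξ₀.mono fun _ hω => marginalInv_spec hu_deriv hu'_zero hu'_top (mul_pos hlam hω)

theorem continuousOn_fLag {I : ℝ → ℝ} (hξ : Measurable ξ) (hξ₀ : ∀ᵐ ω ∂P, 0 < ξ ω)
    (hI : Measurable I) (hI_anti : AntitoneOn I (Ioi 0)) (hI_cont : ContinuousOn I (Ioi 0))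
    {lam₁ : ℝ} (hlam₁ : 0 < lam₁) (hfin : fLag P ξ I lam₁ ≠ ⊤) :
    ContinuousOn (fLag P ξ I) (Ici lam₁) := by
  intro lam (hlam : lam₁ ≤ lam)
  refine tendsto_lintegral_filter_of_dominated_convergence _
    (Eventually.of_forall fun _ => by fun_prop)
    ?_ hfin ?_
  · filter_upwards [self_mem_nhdsWithin] with μ (hμ : lam₁ ≤ μ)
    filter_upwards [hξ₀] with ω hω
    refine ENNReal.ofReal_le_ofReal (mul_le_mul_of_nonneg_right ?_ hω.le)
    exact hI_anti (mul_pos hlam₁ hω) (mul_pos (hlam₁.trans_le hμ) hω)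
      (mul_le_mul_of_nonneg_right hμ hω.le)
  · filter_upwards [hξ₀] with ω hω
    have hIc : ContinuousAt I (lam * ξ ω) :=
      hI_cont.continuousAt (Ioi_mem_nhds (mul_pos (hlam₁.trans_le hlam) hω))
    have : ContinuousAt (fun μ => ENNReal.ofReal (I (μ * ξ ω) * ξ ω)) lam :=
      ENNReal.continuous_ofReal.continuousAt.comp
        ((hIc.comp (f := fun μ => μ * ξ ω) (by fun_prop)).mul continuousAt_const)
    exact this.tendsto.mono_left nhdsWithin_le_nhds

theorem fLag_pos [NeZero P] {I : ℝ → ℝ} (hξ : Measurable ξ) (hξ₀ : ∀ᵐ ω ∂P, 0 < ξ ω)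
    (hI : Measurable I) (hI₀ : ∀ y, 0 < y → 0 < I y) {lam : ℝ} (hlam : 0 < lam) :
    0 < fLag P ξ I lam := by
  rw [pos_iff_ne_zero, fLag, Ne, lintegral_eq_zero_iff (by fun_prop)]
  intro h
  obtain ⟨ω, hω, hξω⟩ := (h.and hξ₀).exists
  have := mul_pos (hI₀ _ (mul_pos hlam hξω)) hξω
  simp only [Pi.zero_apply, ENNReal.ofReal_eq_zero] at hω
  linarith

theorem fLag_marginalInv_le [IsProbabilityMeasure P] {u u' : ℝ → ℝ} (hξ : Measurable ξ)
    (hξ₀ : ∀ᵐ ω ∂P, 0 < ξ ω) (hu_mono : MonotoneOn u (Ici 0))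
    (hu_conc : StrictConcaveOn ℝ (Ici 0) u) (hu0 : u 0 = 0)
    (hu_deriv : ∀ x : ℝ, 0 < x → HasDerivAt u (u' x) x) (hu'_pos : ∀ x : ℝ, 0 < x → 0 < u' x)
    (hu'_zero : Tendsto u' (𝓝[>] 0) atTop) (hu'_top : Tendsto u' atTop (𝓝 0))
    {a lam : ℝ} (ha : 0 < a) (hV : Vval P ξ u a ≠ ⊤) (hlam : (Vval P ξ u a).toReal / a < lam) :
    fLag P ξ (marginalInv u') lam ≤
      ENNReal.ofReal ((Vval P ξ u a).toReal / (lam - (Vval P ξ u a).toReal / a)) := by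
  have hFOC := ae_marginalInv_spec hu_deriv hu'_zero hu'_top hξ₀
    ((div_nonneg ENNReal.toReal_nonneg ha.le).trans_lt hlam)
  exact lintegral_le_div_of_mul_le_utility hξ hξ₀ hu_mono hu_conc.concaveOn hu0 ha hV hlam
    ((measurable_marginalInv hu_conc hu_deriv hu'_pos hu'_zero hu'_top).comp
      (measurable_const.mul hξ))
    (hFOC.mono fun _ h => h.1.le)
    ((ae_mul_cost_lt_utility hu_conc hu0 hu_deriv hFOC).mono fun _ h => h.le)

theorem exists_fLag_eq_ofReal [IsProbabilityMeasure P] {u u' : ℝ → ℝ} (hξ : Measurable ξ)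
    (hξ₀ : ∀ᵐ ω ∂P, 0 < ξ ω) (hu_mono : MonotoneOn u (Ici 0))
    (hu_conc : StrictConcaveOn ℝ (Ici 0) u) (hu0 : u 0 = 0)
    (hu_deriv : ∀ x : ℝ, 0 < x → HasDerivAt u (u' x) x) (hu'_pos : ∀ x : ℝ, 0 < x → 0 < u' x)
    (hu'_zero : Tendsto u' (𝓝[>] 0) atTop) (hu'_top : Tendsto u' atTop (𝓝 0))
    {â : ℝ} (hâ : 0 < â) (hV : Vval P ξ u â ≠ ⊤) :
    ∃ a₀, 0 < a₀ ∧ a₀ ≤ â ∧ ∀ a, 0 < a → a ≤ a₀ →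
      ∃ lam, 0 < lam ∧ fLag P ξ (marginalInv u') lam = ENNReal.ofReal a := by
  set I := marginalInv u'
  set V := (Vval P ξ u â).toReal
  have hV₀ : 0 ≤ V := ENNReal.toReal_nonneg
  have hI : Measurable I := measurable_marginalInv hu_conc hu_deriv hu'_pos hu'_zero hu'_top
  have hf_le (lam : ℝ) (hlam : V / â < lam) :
      fLag P ξ I lam ≤ ENNReal.ofReal (V / (lam - V / â)) :=
    fLag_marginalInv_le hξ hξ₀ hu_mono hu_conc hu0 hu_deriv hu'_pos hu'_zero hu'_top hâ hV hlam
  set lam₁ := V / â + 1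
  have hlam₁ : 0 < lam₁ := by positivity
  have hf₁_fin : fLag P ξ I lam₁ ≠ ⊤ :=
    ne_top_of_le_ne_top ENNReal.ofReal_ne_top (hf_le _ (lt_add_one _))
  have hf₁_pos : 0 < fLag P ξ I lam₁ :=
    fLag_pos hξ hξ₀ hI (fun y hy => (marginalInv_spec hu_deriv hu'_zero hu'_top hy).1) hlam₁
  have hcont : ContinuousOn (fLag P ξ I) (Ici lam₁) :=
    continuousOn_fLag hξ hξ₀ hI
      (strictAntiOn_marginalInv hu_conc hu_deriv hu'_zero hu'_top).antitoneOn
      (continuousOn_marginalInv hu_conc hu_deriv hu'_pos hu'_zero hu'_top) hlam₁ hf₁_fin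
  refine ⟨min (fLag P ξ I lam₁).toReal â, lt_min (ENNReal.toReal_pos hf₁_pos.ne' hf₁_fin) hâ,
    min_le_right _ _, fun a ha ha₀ => ?_⟩
  set M := lam₁ + V / a
  have hM : lam₁ ≤ M := le_add_of_nonneg_right (by positivity)
  have hfM : fLag P ξ I M ≤ ENNReal.ofReal a := by
    refine (hf_le M (by linarith [div_nonneg hV₀ ha.le])).trans (ENNReal.ofReal_le_ofReal ?_)
    have hML : M - V / â = 1 + V / a := by simp only [M, lam₁]; ring
    rw [hML, div_le_iff₀ (by positivity), mul_add, mul_div_cancel₀ _ ha.ne']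
    linarith
  have hf₁ : ENNReal.ofReal a ≤ fLag P ξ I lam₁ := by
    rw [← ENNReal.ofReal_toReal hf₁_fin]
    exact ENNReal.ofReal_le_ofReal (ha₀.trans (min_le_left _ _))
  obtain ⟨lam, hlam, hflam⟩ :=
    intermediate_value_Icc' hM (hcont.mono Icc_subset_Ici_self) ⟨hfM, hf₁⟩
  exact ⟨lam, hlam₁.trans_le hlam.1, hflam⟩

end Multiplier

theorem optimal_for_small_budget_general
    {Ω : Type*} [MeasurableSpace Ω] (P : Measure Ω) [IsProbabilityMeasure P]
    (ξ : Ω → ℝ) (hξmeas : Measurable ξ) (hξpos : ∀ᵐ ω ∂P, 0 < ξ ω)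
    (u u' : ℝ → ℝ) (hu_meas : Measurable u)
    (hu0 : u 0 = 0)
    (hu_mono : StrictMonoOn u (Set.Ici (0:ℝ)))
    (hu_conc : StrictConcaveOn ℝ (Set.Ici (0:ℝ)) u)
    (hu_deriv : ∀ x : ℝ, 0 < x → HasDerivAt u (u' x) x)
    (hu'_pos : ∀ x : ℝ, 0 < x → 0 < u' x)
    (hu'_zero : Tendsto u' (nhdsWithin 0 (Set.Ioi 0)) atTop)
    (hu'_top : Tendsto u' atTop (nhds 0))
    (hfin : ∃ a : ℝ, 0 < a ∧ Vval P ξ u a < ⊤)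
    :
    ∃ a₀ : ℝ, 0 < a₀ ∧ ∀ a : ℝ, 0 < a → a ≤ a₀ →
      ∃ X : Ω → ℝ, IsOptimal P ξ u a X ∧
        ∀ Y : Ω → ℝ, IsOptimal P ξ u a Y → Y =ᵐ[P] X := by
  obtain ⟨â, hâ, hV⟩ := hfin
  obtain ⟨a₀, ha₀, ha₀â, hmult⟩ := exists_fLag_eq_ofReal hξmeas hξpos hu_mono.monotoneOn hu_conc
    hu0 hu_deriv hu'_pos hu'_zero hu'_top hâ hV.ne
  refine ⟨a₀, ha₀, fun a ha haa₀ => ?_⟩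
  obtain ⟨lam, hlam, hcost⟩ := hmult a ha haa₀
  have hX : Measurable fun ω => marginalInv u' (lam * ξ ω) :=
    (measurable_marginalInv hu_conc hu_deriv hu'_pos hu'_zero hu'_top).comp
      (measurable_const.mul hξmeas)
  have hFOC := ae_marginalInv_spec hu_deriv hu'_zero hu'_top hξpos hlam
  have hVa : Vval P ξ u a ≠ ⊤ := ne_top_of_le_ne_top hV.ne
    (Vval_mono hξmeas hξpos hu_mono.monotoneOn ha.le (haa₀.trans ha₀â))
  exact ⟨_, isOptimal_of_deriv_eq hξmeas hξpos hu_conc hu0 hu_deriv hlam.le hX hFOC hcost,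
    fun Y hY => ae_eq_of_isOptimal_of_deriv_eq hξmeas hξpos hu_meas hu_conc hu0 hu_deriv hlam.le
      hX hFOC hcost hVa hY⟩

theorem optimal_for_small_budget
    {Ω : Type*} [MeasurableSpace Ω] (P : Measure Ω) [IsProbabilityMeasure P]
    (ξ : Ω → ℝ) (hξmeas : Measurable ξ) (hξpos : ∀ᵐ ω ∂P, 0 < ξ ω)
    (u u' u'' : ℝ → ℝ) (hu_meas : Measurable u)
    (hu0 : u 0 = 0) (hu_nonneg : ∀ x : ℝ, 0 ≤ x → 0 ≤ u x)
    (hu_mono : StrictMonoOn u (Set.Ici (0:ℝ)))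
    (hu_conc : StrictConcaveOn ℝ (Set.Ici (0:ℝ)) u)
    (hu_deriv : ∀ x : ℝ, 0 < x → HasDerivAt u (u' x) x)
    (hu_deriv2 : ∀ x : ℝ, 0 < x → HasDerivAt u' (u'' x) x)
    (hu'_pos : ∀ x : ℝ, 0 < x → 0 < u' x)
    (hu'_zero : Tendsto u' (nhdsWithin 0 (Set.Ioi 0)) atTop)
    (hu'_top : Tendsto u' atTop (nhds 0))
    (hfin : ∃ a : ℝ, 0 < a ∧ Vval P ξ u a < ⊤)
    :
    ∃ a₀ : ℝ, 0 < a₀ ∧ ∀ a : ℝ, 0 < a → a ≤ a₀ →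
      ∃ X : Ω → ℝ, IsOptimal P ξ u a X ∧
        ∀ Y : Ω → ℝ, IsOptimal P ξ u a Y → Y =ᵐ[P] X :=
  optimal_for_small_budget_general P ξ hξmeas hξpos u u' hu_meas hu0 hu_mono hu_conc hu_deriv
    hu'_pos hu'_zero hu'_top hfin
end
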